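/- Let Γ be an infinite cardinal and 𝒜 ⊆ [Γ]^Γ an almost disjoint family. Then c_0(𝒜) embeds isometrically into the quotient Banach space Y_𝒜 / Z_𝒜; more precisely, the linear map sending the standard unit vector δ_A to the coset of 1_A extends to a linear isometry of c_0(𝒜) into Y_𝒜 / Z_𝒜. -/

import Mathlib

open Cardinal Set

noncomputable def ind {Γ : Type*} (A : Set Γ) : lp (fun _ : Γ => ℝ) ⊤ :=
  ⟨A.indicator 1, memℓp_infty ⟨1, by
    rintro r ⟨γ, rfl⟩
    by_cases h : γ ∈ A <;> simp [Set.indicator_apply, h]⟩⟩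

def AlmostDisjoint {Γ : Type*} (𝒜 : Set (Set Γ)) : Prop :=
  (∀ A ∈ 𝒜, #A = #Γ) ∧ ∀ A ∈ 𝒜, ∀ B ∈ 𝒜, A ≠ B → #(↥(A ∩ B)) < #Γ

noncomputable def Ysub {Γ : Type*} (𝒜 : Set (Set Γ)) : Submodule ℝ (lp (fun _ : Γ => ℝ) ⊤) :=
  (Submodule.span ℝ
    {y | ∃ (n : ℕ) (A : Fin (n + 1) → Set Γ), (∀ i, A i ∈ 𝒜) ∧ y = ind (⋂ i, A i)}).topologicalClosure

def Zgen {Γ : Type*} (𝒜 : Set (Set Γ)) : Set (lp (fun _ : Γ => ℝ) ⊤) :=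
  {y | ∃ (n : ℕ) (A : Fin (n + 2) → Set Γ),
    (∀ i, A i ∈ 𝒜) ∧ Function.Injective A ∧ y = ind (⋂ i, A i)}

noncomputable def Zsub {Γ : Type*} (𝒜 : Set (Set Γ)) : Submodule ℝ (lp (fun _ : Γ => ℝ) ⊤) :=
  (Submodule.span ℝ (Zgen 𝒜)).topologicalClosure

/-- The canonical copy of $c_0(\iota)$ inside $\ell_\infty(\iota)$: the closed linear span
of the standard unit vectors. -/
noncomputable def c0sub (ι : Type*) : Submodule ℝ (lp (fun _ : ι => ℝ) ⊤) :=
  (Submodule.span ℝ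
    {x : lp (fun _ : ι => ℝ) ⊤ | ∃ i : ι, ⇑x = Set.indicator {i} (1 : ι → ℝ)}).topologicalClosure

/-!
For finitely supported `c`, the coset of `∑ c_A 1_A` has quotient norm exactly `max_A |c_A|`, so
`δ_A ↦ [1_A]` is isometric on finitely supported vectors and extends to `c₀(𝒜)` by density.

Upper bound: `∑ c_A 1_{A ∩ ⋃_{B ≠ A} B}` lies in the span of the generators of `Z_𝒜`
(inclusion–exclusion, as these generators are closed under intersection), and subtracting it
leaves `∑ c_A 1_{A \ ⋃_{B ≠ A} B}`, a combination of indicators of pairwise disjoint sets.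

Lower bound: each generator of `Z_𝒜` and each `1_B` with `B ≠ A` is nonzero at fewer than `#Γ`
points of `A`, while `#A = #Γ`. Hence every `∑ c_B 1_B + z` with `z` in the span of the generators
takes the value `c_A` somewhere on `A`, and the bound `|c_A| ≤ ‖∑ c_B 1_B + z‖` passes to the
closure `Z_𝒜`.
-/

theorem LinearMap.exists_linearIsometry_extend_of_norm_eq {𝕜 E Eₗ F : Type*}
    [NormedDivisionRing 𝕜] [AddCommGroup E] [Module 𝕜 E]
    [SeminormedAddCommGroup Eₗ] [Module 𝕜 Eₗ] [IsBoundedSMul 𝕜 Eₗ]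
    [NormedAddCommGroup F] [Module 𝕜 F] [IsBoundedSMul 𝕜 F] [CompleteSpace F]
    {f : E →ₗ[𝕜] F} {e : E →ₗ[𝕜] Eₗ} (h_dense : DenseRange e) (h_norm : ∀ x, ‖f x‖ = ‖e x‖) :
    ∃ Φ : Eₗ →ₗᵢ[𝕜] F, ∀ x, Φ (e x) = f x := by
  have h_bound : ∃ C, ∀ x, ‖f x‖ ≤ C * ‖e x‖ := ⟨1, fun x => by rw [one_mul, h_norm]⟩
  refine ⟨⟨(f.extendOfNorm e).toLinearMap, fun y => ?_⟩, extendOfNorm_eq h_dense h_bound⟩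
  refine h_dense.induction (fun _ ⟨x, hx⟩ => ?_) (isClosed_eq (by fun_prop) (by fun_prop)) y
  rw [← hx]
  exact (congrArg norm (extendOfNorm_eq h_dense h_bound x)).trans (h_norm x)

section Quotient

variable {R E : Type*} [Ring R] [SeminormedAddCommGroup E] [Module R E] {Y Z : Submodule R E}

theorem le_norm_mk_comap_subtype {a : ℝ} (y : Y) (h : ∀ z ∈ Z, a ≤ ‖(y : E) + z‖) :
    a ≤ ‖(Submodule.Quotient.mk y : Y ⧸ Z.comap Y.subtype)‖ := by
  refine QuotientAddGroup.le_norm_iff.mpr fun m hm => ?_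
  have hmy : (m : E) - y ∈ Z := by
    simpa using (Submodule.Quotient.eq _).mp hm
  simpa using h _ hmy

theorem norm_mk_comap_subtype_le (y : Y) {z : E} (hzY : z ∈ Y) (hzZ : z ∈ Z) :
    ‖(Submodule.Quotient.mk y : Y ⧸ Z.comap Y.subtype)‖ ≤ ‖(y : E) - z‖ := by
  have hmk : (Submodule.Quotient.mk y : Y ⧸ Z.comap Y.subtype)
      = Submodule.Quotient.mk (y - ⟨z, hzY⟩) := by
    rw [Submodule.Quotient.eq]
    simpa using hzZ
  rw [hmk]
  exact Submodule.Quotient.norm_mk_le _ _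

end Quotient

theorem forall_le_norm_add_closure {E : Type*} [SeminormedAddCommGroup E] {s : Set E} {x : E}
    {a : ℝ} (h : ∀ z ∈ s, a ≤ ‖x + z‖) : ∀ z ∈ closure s, a ≤ ‖x + z‖ :=
  fun _ hz => closure_minimal h
    (isClosed_le continuous_const (continuous_const.add continuous_id).norm) hz

section Indicators

variable {Γ : Type*}

theorem ind_apply (A : Set Γ) (γ : Γ) : ind A γ = A.indicator 1 γ := rfl

theorem ind_union_add_ind_inter (S T : Set Γ) : ind (S ∪ T) + ind (S ∩ T) = ind S + ind T := by
  ext γ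
  simp only [lp.coeFn_add, Pi.add_apply, ind_apply]
  exact indicator_union_add_inter_apply _ _ _ _

theorem ind_inter_add_ind_diff (S T : Set Γ) : ind (S ∩ T) + ind (S \ T) = ind S := by
  ext γ
  simp only [lp.coeFn_add, Pi.add_apply, ind_apply]
  by_cases hS : γ ∈ S <;> by_cases hT : γ ∈ T <;> simp [hS, hT]

theorem norm_sum_smul_ind_le {ι : Type*} {s : Finset ι} {S : ι → Set Γ}
    (hS : (s : Set ι).PairwiseDisjoint S) {r : ι → ℝ} {M : ℝ} (hM₀ : 0 ≤ M)
    (hM : ∀ i ∈ s, |r i| ≤ M) : ‖∑ i ∈ s, r i • ind (S i)‖ ≤ M := by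
  refine lp.norm_le_of_forall_le hM₀ fun γ => ?_
  simp only [lp.coeFn_sum, Finset.sum_apply, lp.coeFn_smul, Pi.smul_apply, ind_apply,
    smul_eq_mul]
  by_cases hγ : ∃ i ∈ s, γ ∈ S i
  · obtain ⟨i, hi, hγi⟩ := hγ
    rw [Finset.sum_eq_single_of_mem i hi fun j hj hji => ?_]
    · simpa [indicator_of_mem hγi] using hM i hi
    · rw [indicator_of_notMem (hS.elim_set hj hi γ · hγi |> hji), mul_zero]
  · simp only [not_exists, not_and] at hγ
    rw [Finset.sum_eq_zero fun i hi => by rw [indicator_of_notMem (hγ i hi), mul_zero], norm_zero]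
    exact hM₀

theorem ind_biUnion_mem_span {𝒮 : Set (Set Γ)} (h𝒮 : ∀ S ∈ 𝒮, ∀ T ∈ 𝒮, S ∩ T ∈ 𝒮)
    {ι : Type*} (s : Finset ι) {S : ι → Set Γ} (hS : ∀ i ∈ s, S i ∈ 𝒮) :
    ind (⋃ i ∈ s, S i) ∈ Submodule.span ℝ (ind '' 𝒮) := by
  classical
  induction s using Finset.induction_on generalizing S with
  | empty =>
    have h_empty : ind (∅ : Set Γ) = 0 := by ext γ; simp [ind_apply]
    simp [h_empty]
  | insert a s _ ih =>
    have hS' : ∀ i ∈ s, S i ∈ 𝒮 := fun i hi => hS i (Finset.mem_insert_of_mem hi)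
    have ha𝒮 : S a ∈ 𝒮 := hS a (Finset.mem_insert_self a s)
    have h_inter : ind (S a ∩ ⋃ i ∈ s, S i) ∈ Submodule.span ℝ (ind '' 𝒮) := by
      rw [inter_iUnion₂]
      exact ih fun i hi => h𝒮 _ ha𝒮 _ (hS' i hi)
    rw [Finset.set_biUnion_insert,
      eq_sub_of_add_eq (ind_union_add_ind_inter (S a) (⋃ i ∈ s, S i))]
    exact Submodule.sub_mem _ (Submodule.add_mem _ (Submodule.subset_span ⟨_, ha𝒮, rfl⟩)
      (ih hS')) h_inter

end Indicators

section AlmostNull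

variable {Γ : Type*} [Infinite Γ]

def almostNullOn (A : Set Γ) : Submodule ℝ (lp (fun _ : Γ => ℝ) ⊤) where
  carrier := {f | #↥{γ ∈ A | f γ ≠ 0} < #Γ}
  zero_mem' := by simpa using (aleph0_pos.trans_le (aleph0_le_mk Γ))
  add_mem' {f g} hf hg := by
    refine (mk_le_mk_of_subset ?_).trans_lt
      ((mk_union_le _ _).trans_lt (add_lt_of_lt (aleph0_le_mk Γ) hf hg))
    rintro γ ⟨hγA, hγ⟩
    by_contra h
    simp_all
  smul_mem' a f hf := by
    refine (mk_le_mk_of_subset ?_).trans_lt hf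
    rintro γ ⟨hγA, hγ⟩
    exact ⟨hγA, right_ne_zero_of_mul (by simpa using hγ)⟩

theorem mem_almostNullOn {A : Set Γ} {f : lp (fun _ : Γ => ℝ) ⊤} :
    f ∈ almostNullOn A ↔ #↥{γ ∈ A | f γ ≠ 0} < #Γ := Iff.rfl

theorem ind_mem_almostNullOn {A S : Set Γ} (h : #↥(A ∩ S) < #Γ) : ind S ∈ almostNullOn A := by
  refine (mk_le_mk_of_subset ?_).trans_lt h
  rintro γ ⟨hγA, hγ⟩
  by_contra hγS
  simp_all [ind_apply]

theorem abs_le_norm_of_sub_smul_ind_mem_almostNullOn {A : Set Γ} (hA : #A = #Γ)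
    {f : lp (fun _ : Γ => ℝ) ⊤} {a : ℝ} (h : f - a • ind A ∈ almostNullOn A) : |a| ≤ ‖f‖ := by
  obtain ⟨γ, hγA, hγ⟩ : ∃ γ ∈ A, (f - a • ind A) γ = 0 := by
    by_contra! hne
    have hsub : A ⊆ {γ ∈ A | (f - a • ind A) γ ≠ 0} := fun γ hγ => ⟨hγ, hne γ hγ⟩
    exact (mk_le_mk_of_subset hsub).not_gt (hA ▸ mem_almostNullOn.mp h)
  have hfγ : f γ = a := by
    rwa [lp.coeFn_sub, lp.coeFn_smul, Pi.sub_apply, Pi.smul_apply, ind_apply,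
      indicator_of_mem hγA, Pi.one_apply, smul_eq_mul, mul_one, sub_eq_zero] at hγ
  simpa [hfγ] using lp.norm_apply_le_norm ENNReal.top_ne_zero f γ

end AlmostNull

section AlmostDisjoint

variable {Γ : Type*} {𝒜 : Set (Set Γ)}

def ZSets (𝒜 : Set (Set Γ)) : Set (Set Γ) :=
  {S | ∃ t : Finset (Set Γ), ↑t ⊆ 𝒜 ∧ 2 ≤ t.card ∧ S = ⋂₀ ↑t}

theorem inter_mem_ZSets {S T : Set Γ} (hS : S ∈ ZSets 𝒜) (hT : T ∈ ZSets 𝒜) :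
    S ∩ T ∈ ZSets 𝒜 := by
  classical
  obtain ⟨t, ht, hc, rfl⟩ := hS
  obtain ⟨u, hu, -, rfl⟩ := hT
  refine ⟨t ∪ u, ?_, hc.trans (Finset.card_le_card Finset.subset_union_left), ?_⟩
  · simpa using union_subset ht hu
  · simp [sInter_union]

theorem inter_mem_ZSets_of_ne {A B : Set Γ} (hA : A ∈ 𝒜) (hB : B ∈ 𝒜) (hAB : A ≠ B) :
    A ∩ B ∈ ZSets 𝒜 := by
  classical
  refine ⟨{A, B}, ?_, (Finset.card_pair hAB).ge, by simp⟩
  simpa [insert_subset_iff] using ⟨hA, hB⟩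

theorem image_ind_ZSets_subset_Zgen : ind '' ZSets 𝒜 ⊆ Zgen 𝒜 := by
  rintro _ ⟨_, ⟨t, ht, hc, rfl⟩, rfl⟩
  obtain ⟨n, hn⟩ : ∃ n, t.card = n + 2 := ⟨t.card - 2, by omega⟩
  let e := t.equivFinOfCardEq hn
  refine ⟨n, fun i => e.symm i, fun i => ht (e.symm i).2,
    fun i j h => e.symm.injective (Subtype.ext h), ?_⟩
  rw [sInter_eq_iInter]
  exact congrArg ind (e.symm.surjective.iInter_comp fun s : t => (s : Set Γ)).symm

theorem span_Zgen_le_almostNullOn [Infinite Γ] (h𝒜 : AlmostDisjoint 𝒜) {A : Set Γ}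
    (hA : A ∈ 𝒜) : Submodule.span ℝ (Zgen 𝒜) ≤ almostNullOn A := by
  refine Submodule.span_le.mpr ?_
  rintro _ ⟨n, B, hB, hinj, rfl⟩
  obtain ⟨j, hj⟩ : ∃ j, B j ≠ A := by
    by_contra! h
    exact zero_ne_one (hinj ((h 0).trans (h 1).symm))
  exact ind_mem_almostNullOn ((mk_le_mk_of_subset (inter_subset_inter_right A
    (iInter_subset B j))).trans_lt (h𝒜.2 A hA (B j) (hB j) hj.symm))

theorem ind_mem_Ysub {A : Set Γ} (hA : A ∈ 𝒜) : ind A ∈ Ysub 𝒜 :=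
  Submodule.le_topologicalClosure _
    (Submodule.subset_span ⟨0, fun _ => A, fun _ => hA, by rw [iInter_const]⟩)

theorem Zsub_le_Ysub : Zsub 𝒜 ≤ Ysub 𝒜 := by
  refine Submodule.topologicalClosure_mono (Submodule.span_mono ?_)
  rintro _ ⟨n, A, hA, -, rfl⟩
  exact ⟨n + 1, A, hA, rfl⟩

instance : CompleteSpace (Ysub 𝒜) :=
  (Submodule.isClosed_topologicalClosure _).completeSpace_coe

instance : IsClosed (((Zsub 𝒜).comap (Ysub 𝒜).subtype : Submodule ℝ (Ysub 𝒜)) : Set (Ysub 𝒜)) :=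
  (Submodule.isClosed_topologicalClosure _).preimage continuous_subtype_val

end AlmostDisjoint

section UnitVectors

variable (ι : Type*)

theorem c0sub_eq_topologicalClosure_range :
    c0sub ι = (LinearMap.range
      (Finsupp.linearCombination ℝ fun i => ind ({i} : Set ι))).topologicalClosure := by
  rw [Finsupp.range_linearCombination, c0sub]
  congr
  ext x
  exact ⟨fun ⟨i, hi⟩ => ⟨i, lp.ext hi.symm⟩, fun ⟨i, hi⟩ => ⟨i, hi ▸ rfl⟩⟩

noncomputable def finsuppToC0 : (ι →₀ ℝ) →ₗ[ℝ] c0sub ι :=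
  (Finsupp.linearCombination ℝ fun i => ind ({i} : Set ι)).codRestrict _ fun c => by
    rw [c0sub_eq_topologicalClosure_range]
    exact Submodule.le_topologicalClosure _ (LinearMap.mem_range_self _ c)

variable {ι}

theorem finsuppToC0_apply (c : ι →₀ ℝ) (i : ι) :
    (finsuppToC0 ι c : lp (fun _ : ι => ℝ) ⊤) i = c i := by
  classical
  rw [finsuppToC0, LinearMap.codRestrict_apply, Finsupp.linearCombination_apply, Finsupp.sum,
    lp.coeFn_sum, Finset.sum_apply]
  simp [ind_apply, indicator_apply, eq_comm]

theorem denseRange_finsuppToC0 : DenseRange (finsuppToC0 ι) := by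
  refine Topology.IsInducing.subtypeVal.dense_iff.mpr fun x => ?_
  rw [← range_comp]
  exact (c0sub_eq_topologicalClosure_range ι).le x.2

end UnitVectors

section QuotientInd

variable {Γ : Type*} {𝒜 : Set (Set Γ)}

variable (𝒜) in
noncomputable def indSum : (𝒜 →₀ ℝ) →ₗ[ℝ] Ysub 𝒜 :=
  Finsupp.linearCombination ℝ fun A : 𝒜 => ⟨ind (A : Set Γ), ind_mem_Ysub A.2⟩

theorem coe_indSum (c : 𝒜 →₀ ℝ) :
    (indSum 𝒜 c : lp (fun _ : Γ => ℝ) ⊤)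
      = Finsupp.linearCombination ℝ (fun A : 𝒜 => ind (A : Set Γ)) c :=
  Finsupp.apply_linearCombination ℝ (Ysub 𝒜).subtype _ c

variable (𝒜) in
noncomputable def quotientInd :
    (𝒜 →₀ ℝ) →ₗ[ℝ] Ysub 𝒜 ⧸ (Zsub 𝒜).comap (Ysub 𝒜).subtype :=
  ((Zsub 𝒜).comap (Ysub 𝒜).subtype).mkQ ∘ₗ indSum 𝒜

theorem quotientInd_apply (c : 𝒜 →₀ ℝ) :
    quotientInd 𝒜 c = Submodule.Quotient.mk (indSum 𝒜 c) := rfl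

theorem abs_le_norm_quotientInd [Infinite Γ] (h𝒜 : AlmostDisjoint 𝒜) (c : 𝒜 →₀ ℝ) (A : 𝒜) :
    |c A| ≤ ‖quotientInd 𝒜 c‖ := by
  rw [quotientInd_apply]
  refine le_norm_mk_comap_subtype _ (forall_le_norm_add_closure fun z hz => ?_)
  refine abs_le_norm_of_sub_smul_ind_mem_almostNullOn (h𝒜.1 A A.2) ?_
  have h_rest : Finsupp.linearCombination ℝ (fun B : 𝒜 => ind (B : Set Γ)) (c.erase A)
      ∈ almostNullOn (A : Set Γ) := by
    rw [Finsupp.linearCombination_apply]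
    refine Submodule.sum_mem _ fun B hB => Submodule.smul_mem _ _ (ind_mem_almostNullOn ?_)
    have hBA : B ≠ A := by
      rintro rfl
      simp at hB
    exact h𝒜.2 _ A.2 _ B.2 fun h => hBA (Subtype.ext h).symm
  have h_split := congrArg (Finsupp.linearCombination ℝ fun B : 𝒜 => ind (B : Set Γ))
    (Finsupp.erase_add_single A c)
  rw [map_add, Finsupp.linearCombination_single] at h_split
  convert add_mem h_rest (span_Zgen_le_almostNullOn h𝒜 A.2 hz) using 1
  rw [coe_indSum, ← h_split]
  abel

theorem norm_quotientInd_le (c : 𝒜 →₀ ℝ) :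
    ‖quotientInd 𝒜 c‖ ≤ ‖(finsuppToC0 𝒜 c : lp (fun _ : 𝒜 => ℝ) ⊤)‖ := by
  classical
  let z := ∑ A ∈ c.support, c A • ind ((A : Set Γ) ∩ ⋃ B ∈ c.support.erase A, (B : Set Γ))
  have hz : z ∈ Zsub 𝒜 := by
    refine Submodule.le_topologicalClosure _
      (Submodule.sum_mem _ fun A _ => Submodule.smul_mem _ _ ?_)
    refine Submodule.span_mono image_ind_ZSets_subset_Zgen ?_
    rw [inter_iUnion₂]
    refine ind_biUnion_mem_span (fun S hS T hT => inter_mem_ZSets hS hT) _ fun B hB => ?_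
    exact inter_mem_ZSets_of_ne A.2 B.2 fun h => Finset.ne_of_mem_erase hB (Subtype.ext h).symm
  have h_sub : (indSum 𝒜 c : lp (fun _ : Γ => ℝ) ⊤) - z
      = ∑ A ∈ c.support, c A • ind ((A : Set Γ) \ ⋃ B ∈ c.support.erase A, (B : Set Γ)) := by
    rw [coe_indSum, Finsupp.linearCombination_apply, Finsupp.sum, ← Finset.sum_sub_distrib]
    refine Finset.sum_congr rfl fun A _ => ?_
    rw [← smul_sub, ← ind_inter_add_ind_diff (A : Set Γ), add_sub_cancel_left]
  have h_disj : (c.support : Set 𝒜).PairwiseDisjoint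
      fun A => (A : Set Γ) \ ⋃ B ∈ c.support.erase A, (B : Set Γ) := by
    intro A _ A' hA' hne
    refine disjoint_left.mpr fun γ hγ hγ' => hγ.2 ?_
    exact mem_biUnion (Finset.mem_erase.mpr ⟨hne.symm, hA'⟩) hγ'.1
  rw [quotientInd_apply]
  refine (norm_mk_comap_subtype_le _ (Zsub_le_Ysub hz) hz).trans ?_
  rw [h_sub]
  refine norm_sum_smul_ind_le h_disj (norm_nonneg _) fun A _ => ?_
  simpa [finsuppToC0_apply] using
    lp.norm_apply_le_norm ENNReal.top_ne_zero (finsuppToC0 𝒜 c : lp (fun _ : 𝒜 => ℝ) ⊤) A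

theorem norm_quotientInd [Infinite Γ] (h𝒜 : AlmostDisjoint 𝒜) (c : 𝒜 →₀ ℝ) :
    ‖quotientInd 𝒜 c‖ = ‖finsuppToC0 𝒜 c‖ := by
  refine le_antisymm (norm_quotientInd_le c) ?_
  rw [Submodule.coe_norm]
  refine lp.norm_le_of_forall_le (norm_nonneg _) fun A => ?_
  rw [finsuppToC0_apply, Real.norm_eq_abs]
  exact abs_le_norm_quotientInd h𝒜 c A

end QuotientInd

theorem c0_embeds_isometrically_in_Y_quotient_Z {Γ : Type*} [Infinite Γ] (𝒜 : Set (Set Γ))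
    (h𝒜 : AlmostDisjoint 𝒜) :
    ∃ Φ : ↥(c0sub ↥𝒜) →ₗᵢ[ℝ] (↥(Ysub 𝒜) ⧸ (Zsub 𝒜).comap (Ysub 𝒜).subtype),
      ∀ (A : ↥𝒜) (x : ↥(c0sub ↥𝒜)),
        ⇑(x : lp (fun _ : ↥𝒜 => ℝ) ⊤) = Set.indicator {A} (1 : ↥𝒜 → ℝ) →
        ∀ y : ↥(Ysub 𝒜), (y : lp (fun _ : Γ => ℝ) ⊤) = ind (A : Set Γ) →
          Φ x = Submodule.Quotient.mk y := by
  obtain ⟨Φ, hΦ⟩ : ∃ Φ : c0sub 𝒜 →ₗᵢ[ℝ] Ysub 𝒜 ⧸ (Zsub 𝒜).comap (Ysub 𝒜).subtype,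
      ∀ c, Φ (finsuppToC0 𝒜 c) = quotientInd 𝒜 c :=
    -- naming `F` lets instance search, not unification, supply the normed quotient structure
    LinearMap.exists_linearIsometry_extend_of_norm_eq
      (F := Ysub 𝒜 ⧸ (Zsub 𝒜).comap (Ysub 𝒜).subtype) denseRange_finsuppToC0 (norm_quotientInd h𝒜)
  refine ⟨Φ, fun A x hx y hy => ?_⟩
  have hxA : x = finsuppToC0 𝒜 (Finsupp.single A 1) := by
    ext B
    rw [finsuppToC0_apply, hx]
    by_cases hB : B = A <;> simp [hB]
  have hyA : y = ⟨ind (A : Set Γ), ind_mem_Ysub A.2⟩ := Subtype.ext hy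
  rw [hxA, hΦ, hyA, quotientInd_apply, indSum, Finsupp.linearCombination_single, one_smul]
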